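/- arXiv:1104.4692 — 2 statements merged into one kernel-verified Lean document; each statement's English description precedes it below -/
import Mathlib

section
/- Let d ≥ 1 and let X be a finite nonempty subset of Ω(d). (a) For every (k,l) ∈ ℕ×ℕ, the sum S_{k,l} := Σ_{x,y∈X} (x^*y)^k·(y^*x)^l is a nonnegative real number, and if k = l then S_{k,k} ≥ |X|²/C(d+k−1,k). (b) If 𝒯 is a lower set, then S_{k,l} = δ_{k,l}·|X|²/C(d+k−1,k) for every (k,l) ∈ 𝒯 if and only if X is a complex spherical 𝒯-design. -/
open Finset

/-- The Hermitian inner product `x^* y = ∑ i, conj (x i) * y i` on `ℂ^d`. -/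
noncomputable def cInner {d : ℕ} (x y : Fin d → ℂ) : ℂ :=
  ∑ i, (starRingEnd ℂ) (x i) * y i

/-- A lower set in `ℕ × ℕ` with respect to the product order. -/
def IsLowerSet' (T : Finset (ℕ × ℕ)) : Prop :=
  ∀ kl ∈ T, ∀ mn : ℕ × ℕ, mn.1 ≤ kl.1 → mn.2 ≤ kl.2 → mn ∈ T

/-- The average over the unit sphere `Ω(d)` of the monomial
`z ↦ ∏ i, z i ^ a i * conj (z i) ^ b i`. -/
noncomputable def monomialAvg (d : ℕ) (a b : Fin d → ℕ) : ℂ :=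
  if a = b then
    ((Nat.factorial (d - 1) : ℂ) * ∏ i, (Nat.factorial (a i) : ℂ)) /
      (Nat.factorial (d + (∑ i, a i) - 1) : ℂ)
  else 0

/-- `X` is a complex spherical `T`-design: every monomial of bidegree `(k,l) ∈ T`
has the same average over `X` as over the sphere `Ω(d)`. -/
def IsDesign (d : ℕ) (X : Finset (Fin d → ℂ)) (T : Finset (ℕ × ℕ)) : Prop :=
  ∀ kl ∈ T, ∀ a b : Fin d → ℕ, (∑ i, a i) = kl.1 → (∑ i, b i) = kl.2 →
    (∑ z ∈ X, (∏ i, (z i) ^ (a i)) * ∏ i, ((starRingEnd ℂ) (z i)) ^ (b i))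
      = (X.card : ℂ) * monomialAvg d a b

/-- The Jacobi polynomial `g_{k,l}` for the complex sphere in dimension `d`. -/
noncomputable def jacobi (d k l : ℕ) (x : ℂ) : ℂ :=
  (((d + k + l - 1 : ℕ) : ℂ) / (Nat.factorial (d - 1) : ℂ)) *
    ∑ r ∈ Finset.range (min k l + 1),
      (((-1 : ℂ) ^ r * (Nat.factorial (d + k + l - r - 2) : ℂ)) /
          ((Nat.factorial r : ℂ) * (Nat.factorial (k - r) : ℂ) *
            (Nat.factorial (l - r) : ℂ))) *
        x ^ (k - r) * ((starRingEnd ℂ) x) ^ (l - r)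

open scoped Classical in
/-- The inner product set `A(X) = {x^* y : x, y ∈ X, x ≠ y}`. -/
noncomputable def innerSet {d : ℕ} (X : Finset (Fin d → ℂ)) : Finset ℂ :=
  ((X ×ˢ X).filter fun p => p.1 ≠ p.2).image fun p => cInner p.1 p.2

/-- `m_{k,l}`, the dimension of the harmonic space `Harm(k,l)` in dimension `d`. -/
def mdim (d k l : ℕ) : ℕ :=
  (d + k - 1).choose (d - 1) * (d + l - 1).choose (d - 1) -
    (d + k - 2).choose (d - 1) * (d + l - 2).choose (d - 1)

/-- The convolution `U * V = {(k + l', k' + l) : (k,l) ∈ U, (k',l') ∈ V}`. -/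
def convSet (U V : Finset (ℕ × ℕ)) : Finset (ℕ × ℕ) :=
  (U ×ˢ V).image fun p => (p.1.1 + p.2.2, p.2.1 + p.1.2)

/-- `X` is an `S`-code: it has an annihilator polynomial supported on monomials
`x^k * conj x^l` with `(k,l) ∈ S`. -/
def IsCode (d : ℕ) (X : Finset (Fin d → ℂ)) (S : Finset (ℕ × ℕ)) : Prop :=
  ∃ c : ℕ × ℕ → ℝ,
    (∀ α ∈ innerSet X, ∑ kl ∈ S, (c kl : ℂ) * α ^ kl.1 * ((starRingEnd ℂ) α) ^ kl.2 = 0) ∧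
    0 < ∑ kl ∈ S, c kl

open scoped Classical

/-!
By the multinomial theorem, `S_{k,l} = ∑_{|a|=k, |b|=l} C(k;a) C(l;b) |M_{a,b}|²` with moments
`M_{a,b} = ∑_{z∈X} z^a z̄^b`. On the sphere `∑_{|a|=k} C(k;a) M_{a,a} = ∑_{z∈X} ‖z‖^{2k} = |X|`,
and the sphere averages satisfy `C(k;a) μ_{a,a} = 1 / C(d+k-1,k)`, so completing the square gives
`S_{k,l} = δ_{k,l} |X|² / C(d+k-1,k) + ∑ C(k;a) C(l;b) |M_{a,b} - |X| μ_{a,b}|²`.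
The defect sum is nonnegative and vanishes exactly when `M_{a,b} = |X| μ_{a,b}` for all
`a, b` of bidegree `(k,l)`.
-/

open Complex ComplexConjugate

section

variable {d : ℕ}

noncomputable def moment (X : Finset (Fin d → ℂ)) (a b : Fin d → ℕ) : ℂ :=
  ∑ z ∈ X, (∏ i, z i ^ a i) * ∏ i, conj (z i) ^ b i

lemma conj_moment (X : Finset (Fin d → ℂ)) (a b : Fin d → ℕ) :
    conj (moment X a b) = moment X b a := by
  simp only [moment, map_sum, map_mul, map_prod, map_pow, conj_conj]
  exact sum_congr rfl fun z _ => mul_comm _ _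

lemma conj_monomialAvg (a b : Fin d → ℕ) : conj (monomialAvg d a b) = monomialAvg d a b := by
  unfold monomialAvg
  split_ifs <;> simp

lemma card_piAntidiag_univ_fin (k : ℕ) :
    (piAntidiag (univ : Finset (Fin d)) k).card = (d + k - 1).choose k := by
  rw [← map_sym_eq_piAntidiag, card_map, sym_univ, card_univ, Sym.card_sym_eq_choose,
    Fintype.card_fin]

lemma multinomial_mul_monomialAvg_self (hd : 1 ≤ d) {k : ℕ} {a : Fin d → ℕ}
    (ha : ∑ i, a i = k) :
    (Nat.multinomial univ a : ℂ) * monomialAvg d a a = 1 / (d + k - 1).choose k := by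
  have hmult : ((∏ i, (a i).factorial : ℕ) : ℂ) * Nat.multinomial univ a = k.factorial := by
    rw [← ha]; exact_mod_cast Nat.multinomial_spec univ a
  rw [monomialAvg, if_pos rfl, ha, Nat.cast_choose ℂ (by omega : k ≤ d + k - 1),
    show d + k - 1 - k = d - 1 by omega]
  push_cast at hmult
  have := Nat.factorial_ne_zero (d + k - 1)
  field_simp
  linear_combination ((d - 1).factorial : ℂ) * hmult

lemma sum_multinomial_mul_moment_self (X : Finset (Fin d → ℂ))
    (hX : ∀ x ∈ X, cInner x x = 1) (k : ℕ) :
    ∑ a ∈ piAntidiag univ k, (Nat.multinomial univ a : ℂ) * moment X a a = X.card := by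
  have hpow : ∀ z ∈ X, ∑ a ∈ piAntidiag univ k, (Nat.multinomial univ a : ℂ) *
      ((∏ i, z i ^ a i) * ∏ i, conj (z i) ^ a i) = 1 := by
    intro z hz
    rw [← one_pow k, ← hX z hz, cInner, sum_pow_eq_sum_piAntidiag]
    refine sum_congr rfl fun a _ => ?_
    simp only [← prod_mul_distrib, mul_pow, mul_comm]
  simp only [moment, mul_sum]
  rw [sum_comm, sum_congr rfl hpow, sum_const, nsmul_one]

lemma cInner_pow_mul_cInner_pow (x y : Fin d → ℂ) (k l : ℕ) :
    cInner x y ^ k * cInner y x ^ l =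
      ∑ a ∈ piAntidiag univ k, ∑ b ∈ piAntidiag univ l,
        (Nat.multinomial univ a * Nat.multinomial univ b : ℂ) *
          (((∏ i, x i ^ b i) * ∏ i, conj (x i) ^ a i) *
            ((∏ i, y i ^ a i) * ∏ i, conj (y i) ^ b i)) := by
  rw [cInner, cInner, sum_pow_eq_sum_piAntidiag, sum_pow_eq_sum_piAntidiag, sum_mul_sum]
  refine sum_congr rfl fun a _ => sum_congr rfl fun b _ => ?_
  simp only [mul_pow, prod_mul_distrib]
  ring

lemma sum_sum_cInner_pow_mul_cInner_pow_eq_moment (X : Finset (Fin d → ℂ)) (k l : ℕ) :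
    ∑ x ∈ X, ∑ y ∈ X, cInner x y ^ k * cInner y x ^ l =
      ∑ a ∈ piAntidiag univ k, ∑ b ∈ piAntidiag univ l,
        (Nat.multinomial univ a * Nat.multinomial univ b : ℂ) *
          (moment X a b * conj (moment X a b)) := by
  have hprod : ∀ a b, moment X a b * conj (moment X a b) = ∑ x ∈ X, ∑ y ∈ X,
      ((∏ i, x i ^ b i) * ∏ i, conj (x i) ^ a i) *
        ((∏ i, y i ^ a i) * ∏ i, conj (y i) ^ b i) := by
    intro a b
    rw [conj_moment, mul_comm, moment, moment, sum_mul_sum]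
  simp only [cInner_pow_mul_cInner_pow, hprod, mul_sum]
  simp only [← sum_product' X X, ← sum_product' (piAntidiag univ k)]
  exact sum_comm

lemma sum_sum_multinomial_mul_monomialAvg (hd : 1 ≤ d) (k l : ℕ)
    (f : (Fin d → ℕ) → (Fin d → ℕ) → ℂ) :
    ∑ a ∈ piAntidiag univ k, ∑ b ∈ piAntidiag univ l,
        (Nat.multinomial univ a * Nat.multinomial univ b : ℂ) * monomialAvg d a b * f a b =
      if k = l then 1 / (d + k - 1).choose k * ∑ a ∈ piAntidiag univ k,
        (Nat.multinomial univ a : ℂ) * f a a else 0 := by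
  split_ifs with hkl
  · subst hkl
    rw [mul_sum]
    refine sum_congr rfl fun a ha => ?_
    rw [sum_eq_single_of_mem a ha fun b _ hba => by simp [monomialAvg, hba.symm],
      ← multinomial_mul_monomialAvg_self hd (mem_piAntidiag.1 ha).1]
    ring
  · refine sum_eq_zero fun a ha => sum_eq_zero fun b hb => ?_
    have hab : a ≠ b := by
      rintro rfl
      exact hkl ((mem_piAntidiag.1 ha).1.symm.trans (mem_piAntidiag.1 hb).1)
    simp [monomialAvg, hab]

noncomputable def designDefect (X : Finset (Fin d → ℂ)) (k l : ℕ) : ℝ :=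
  ∑ a ∈ piAntidiag univ k, ∑ b ∈ piAntidiag univ l,
    (Nat.multinomial univ a * Nat.multinomial univ b : ℝ) *
      normSq (moment X a b - X.card * monomialAvg d a b)

lemma designDefect_term_nonneg (X : Finset (Fin d → ℂ)) (a b : Fin d → ℕ) :
    0 ≤ (Nat.multinomial univ a * Nat.multinomial univ b : ℝ) *
      normSq (moment X a b - X.card * monomialAvg d a b) :=
  mul_nonneg (by positivity) (normSq_nonneg _)

lemma designDefect_nonneg (X : Finset (Fin d → ℂ)) (k l : ℕ) : 0 ≤ designDefect X k l :=
  sum_nonneg fun _ _ => sum_nonneg fun _ _ => designDefect_term_nonneg X _ _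

lemma designDefect_eq_zero_iff (X : Finset (Fin d → ℂ)) (k l : ℕ) :
    designDefect X k l = 0 ↔ ∀ a b : Fin d → ℕ, ∑ i, a i = k → ∑ i, b i = l →
      moment X a b = X.card * monomialAvg d a b := by
  have hmult (a b : Fin d → ℕ) :
      (Nat.multinomial univ a * Nat.multinomial univ b : ℝ) ≠ 0 := by
    have := Nat.multinomial_pos univ a
    have := Nat.multinomial_pos univ b
    positivity
  rw [designDefect, sum_eq_zero_iff_of_nonneg fun _ _ => sum_nonneg fun _ _ =>
    designDefect_term_nonneg X _ _]
  simp only [sum_eq_zero_iff_of_nonneg fun _ _ => designDefect_term_nonneg X _ _, mem_piAntidiag,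
    mem_univ, implies_true, and_true, mul_eq_zero, hmult, false_or, normSq_eq_zero, sub_eq_zero]
  exact ⟨fun h a b ha hb => h a ha b hb, fun h a ha b hb => h a b ha hb⟩

lemma sum_sum_cInner_pow_mul_cInner_pow_eq_designDefect (hd : 1 ≤ d) (X : Finset (Fin d → ℂ))
    (hX : ∀ x ∈ X, cInner x x = 1) (k l : ℕ) :
    ∑ x ∈ X, ∑ y ∈ X, cInner x y ^ k * cInner y x ^ l =
      (((if k = l then (X.card : ℝ) ^ 2 / (d + k - 1).choose k else 0) +
        designDefect X k l : ℝ) : ℂ) := by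
  have hexpand : (designDefect X k l : ℂ) =
      (∑ a ∈ piAntidiag univ k, ∑ b ∈ piAntidiag univ l,
        (Nat.multinomial univ a * Nat.multinomial univ b : ℂ) *
          (moment X a b * conj (moment X a b)))
      - X.card * (∑ a ∈ piAntidiag univ k, ∑ b ∈ piAntidiag univ l,
        (Nat.multinomial univ a * Nat.multinomial univ b : ℂ) * monomialAvg d a b *
          conj (moment X a b))
      - X.card * (∑ a ∈ piAntidiag univ k, ∑ b ∈ piAntidiag univ l,
        (Nat.multinomial univ a * Nat.multinomial univ b : ℂ) * monomialAvg d a b * moment X a b)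
      + X.card ^ 2 * (∑ a ∈ piAntidiag univ k, ∑ b ∈ piAntidiag univ l,
        (Nat.multinomial univ a * Nat.multinomial univ b : ℂ) * monomialAvg d a b *
          monomialAvg d a b) := by
    simp only [designDefect, ofReal_sum, ofReal_mul, ofReal_natCast, ← mul_conj, map_sub,
      map_mul, map_natCast, conj_monomialAvg, mul_sum, ← sum_sub_distrib, ← sum_add_distrib]
    refine sum_congr rfl fun a _ => sum_congr rfl fun b _ => ?_
    ring
  rw [sum_sum_cInner_pow_mul_cInner_pow_eq_moment, ofReal_add, hexpand,
    sum_sum_multinomial_mul_monomialAvg hd, sum_sum_multinomial_mul_monomialAvg hd,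
    sum_sum_multinomial_mul_monomialAvg hd]
  split_ifs with hkl
  · subst hkl
    have hN : ((d + k - 1).choose k : ℂ) ≠ 0 :=
      Nat.cast_ne_zero.2 (Nat.choose_pos (by omega)).ne'
    have hμ :
        ∑ a ∈ piAntidiag univ k, (Nat.multinomial univ a : ℂ) * monomialAvg d a a = 1 := by
      rw [sum_congr rfl fun a ha => multinomial_mul_monomialAvg_self hd (mem_piAntidiag.1 ha).1,
        sum_const, card_piAntidiag_univ_fin, nsmul_eq_mul]
      field_simp
    simp only [conj_moment, sum_multinomial_mul_moment_self X hX, hμ]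
    push_cast
    field_simp
    ring
  · simp

end

theorem stmt_2_general {d : ℕ} (hd : 1 ≤ d) (X : Finset (Fin d → ℂ))
    (hXsphere : ∀ x ∈ X, cInner x x = 1)
    (T : Finset (ℕ × ℕ)) :
    (∀ k l : ℕ,
      (∑ x ∈ X, ∑ y ∈ X, (cInner x y) ^ k * (cInner y x) ^ l).im = 0 ∧
      0 ≤ (∑ x ∈ X, ∑ y ∈ X, (cInner x y) ^ k * (cInner y x) ^ l).re ∧
      (k = l →
        (X.card : ℝ) ^ 2 / ((d + k - 1).choose k) ≤
          (∑ x ∈ X, ∑ y ∈ X, (cInner x y) ^ k * (cInner y x) ^ l).re)) ∧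
    ((∀ kl ∈ T,
        ∑ x ∈ X, ∑ y ∈ X, (cInner x y) ^ kl.1 * (cInner y x) ^ kl.2 =
          if kl.1 = kl.2 then (X.card : ℂ) ^ 2 / ((d + kl.1 - 1).choose kl.1) else 0) ↔
      IsDesign d X T) := by
  have hS := sum_sum_cInner_pow_mul_cInner_pow_eq_designDefect hd X hXsphere
  refine ⟨fun k l => ⟨?_, ?_, fun hkl => ?_⟩, forall₂_congr fun kl _ => ?_⟩
  · rw [hS, ofReal_im]
  · rw [hS, ofReal_re]
    exact add_nonneg (by split_ifs <;> positivity) (designDefect_nonneg X k l)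
  · rw [hS, ofReal_re, if_pos hkl]
    exact le_add_of_nonneg_right (designDefect_nonneg X k l)
  · refine Iff.trans ?_ (designDefect_eq_zero_iff X kl.1 kl.2)
    rw [hS]
    split_ifs <;> simp

/-- (a) the moment sums `S_{k,l} = ∑_{x,y∈X} (x^*y)^k (y^*x)^l` are
nonnegative reals, with `S_{k,k} ≥ |X|²/C(d+k-1,k)`; (b) for a lower set `T`,
equality for all `(k,l) ∈ T` holds iff `X` is a `T`-design. -/
theorem stmt_2 {d : ℕ} (hd : 1 ≤ d) (X : Finset (Fin d → ℂ)) (hXne : X.Nonempty)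
    (hXsphere : ∀ x ∈ X, cInner x x = 1)
    (T : Finset (ℕ × ℕ)) (hT : IsLowerSet' T) :
    (∀ k l : ℕ,
      (∑ x ∈ X, ∑ y ∈ X, (cInner x y) ^ k * (cInner y x) ^ l).im = 0 ∧
      0 ≤ (∑ x ∈ X, ∑ y ∈ X, (cInner x y) ^ k * (cInner y x) ^ l).re ∧
      (k = l →
        (X.card : ℝ) ^ 2 / ((d + k - 1).choose k) ≤
          (∑ x ∈ X, ∑ y ∈ X, (cInner x y) ^ k * (cInner y x) ^ l).re)) ∧
    ((∀ kl ∈ T,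
        ∑ x ∈ X, ∑ y ∈ X, (cInner x y) ^ kl.1 * (cInner y x) ^ kl.2 =
          if kl.1 = kl.2 then (X.card : ℂ) ^ 2 / ((d + kl.1 - 1).choose kl.1) else 0) ↔
      IsDesign d X T) :=
  stmt_2_general hd X hXsphere T
end

section
/- Let d ≥ 1 and let 𝒯 = {(i,j) ∈ ℕ×ℕ : i+j ≤ 3}. Let Y ⊆ Ω(d) be a finite set with Y ∩ (−Y) = ∅, and suppose X = Y ∪ (−Y) is a complex spherical 𝒯-design whose inner product set A(X) has cardinality 3. Then |Y| = 2d, A(X) = {i/√(2d−1), −i/√(2d−1), −1}, and the matrix C indexed by Y×Y with entries C_{xy} = i·√(2d−1)·(x^*y − δ_{x,y}) is a skew-symmetric conference matrix: all its entries are real, its diagonal entries are 0, its off-diagonal entries are ±1, Cᵀ = −C, and C·Cᵀ = (2d−1)·I. -/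
open Finset Matrix

open scoped Classical

open scoped Classical in
/-- The matrix `C` on `Y` with entries `i·√(2d-1)·(x^*y − δ_{x,y})`. -/
noncomputable def confC {d : ℕ} (Y : Finset (Fin d → ℂ)) :
    Matrix {v // v ∈ Y} {v // v ∈ Y} ℂ :=
  fun x y => Complex.I * (Real.sqrt (2 * (d : ℝ) - 1) : ℂ) *
    (cInner x.1 y.1 - if x = y then 1 else 0)


/-!
Put `X = Y ∪ (−Y)`. Since `X` is antipodal, `−1 ∈ A(X)` and `A(X) \ {−1}` is closed under
negation, so degree 3 forces `A(X) = {β, −β, −1}`: every off-diagonal Gram entry of `Y` is `±β`.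
The `(2,0)`- and `(1,1)`-design conditions say `∑_{y ∈ Y} ⟨x,y⟩⟨w,y⟩ = 0` and that `Y` is a tight
frame, `∑_{y ∈ Y} ⟨x,y⟩⟨y,w⟩ = (|Y|/d)⟨x,w⟩`. For `x = w ∈ Y` these read
`1 + (|Y| − 1)β² = 0` and `1 + (|Y| − 1)|β|² = |Y|/d`, whence `β = ±i/√(|Y| − 1)` and `|Y| = 2d`.
In terms of the Gram matrix `G` of `Y` they say `G Gᵀ = 0` and `G + Gᵀ = 2I`, so
`C = i√(2d−1)(G − I)` satisfies `Cᵀ = −C` and `C Cᵀ = (2d−1)I`.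
-/

lemma Finset.exists_eq_pair_neg_of_card_eq_two {R : Type*} [NonAssocRing R] [NoZeroDivisors R]
    [CharZero R] [DecidableEq R] {s : Finset R} (hs : s.card = 2) (hneg : ∀ a ∈ s, -a ∈ s) :
    ∃ b, s = {b, -b} := by
  obtain ⟨a, b, hab, rfl⟩ := Finset.card_eq_two.mp hs
  rcases Finset.mem_insert.mp (hneg a (by simp)) with ha | ha
  · have ha0 : a = 0 := CharZero.neg_eq_self_iff.mp ha
    subst ha0
    have hb := hneg b (by simp)
    simp only [Finset.mem_insert, Finset.mem_singleton, neg_eq_zero, CharZero.neg_eq_self_iff]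
      at hb
    exact absurd (hb.elim Eq.symm Eq.symm) hab
  · exact ⟨a, by rw [Finset.mem_singleton.mp ha]⟩

lemma Finset.sum_eq_add_card_sub_one_mul {ι R : Type*} [CommRing R] [DecidableEq ι]
    {s : Finset ι} {a : ι} (ha : a ∈ s) {f : ι → R} {v : R}
    (hv : ∀ b ∈ s, b ≠ a → f b = v) :
    ∑ b ∈ s, f b = f a + ((s.card : R) - 1) * v := by
  rw [← Finset.sum_erase_add s f ha, Finset.sum_congr rfl fun b hb => hv b
    (Finset.mem_of_mem_erase hb) (Finset.ne_of_mem_erase hb), Finset.sum_const,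
    Finset.card_erase_of_mem ha, nsmul_eq_mul, Nat.cast_pred (Finset.card_pos.mpr ⟨a, ha⟩)]
  ring

lemma prod_pow_pi_single {ι M : Type*} [Fintype ι] [DecidableEq ι] [CommMonoid M]
    (z : ι → M) (i : ι) : ∏ k, z k ^ (Pi.single i 1 : ι → ℕ) k = z i := by
  simp [Pi.single_apply, pow_ite]

lemma conj_I_div_ofReal (r : ℝ) :
    starRingEnd ℂ (Complex.I / (r : ℂ)) = -(Complex.I / (r : ℂ)) := by
  simp [map_div₀, neg_div]

lemma I_mul_ofReal_mul_I_div_ofReal {s : ℝ} (hs : s ≠ 0) :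
    Complex.I * (s : ℂ) * (Complex.I / (s : ℂ)) = -1 := by
  have hs' : (s : ℂ) ≠ 0 := by exact_mod_cast hs
  field_simp
  simp

lemma eq_I_div_sqrt_or_eq_neg {r : ℝ} (hr : 0 < r) {b : ℂ} (h : (r : ℂ) * b ^ 2 = -1) :
    b = Complex.I / (√r : ℂ) ∨ b = -(Complex.I / (√r : ℂ)) := by
  have hsqrt : ((√r : ℝ) : ℂ) ^ 2 = r := by exact_mod_cast Real.sq_sqrt hr.le
  have hr0 : (r : ℂ) ≠ 0 := by exact_mod_cast hr.ne'
  rw [← sq_eq_sq_iff_eq_or_eq_neg, div_pow, Complex.I_sq, hsqrt]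
  field_simp
  linear_combination h

section cInner

variable {d : ℕ}

lemma cInner_eq_inner (x y : Fin d → ℂ) :
    cInner x y = inner ℂ (WithLp.toLp 2 x : EuclideanSpace ℂ (Fin d)) (WithLp.toLp 2 y) := by
  simp [cInner, PiLp.inner_apply, mul_comm]

lemma norm_toLp_eq_one {x : Fin d → ℂ} (hx : cInner x x = 1) :
    ‖(WithLp.toLp 2 x : EuclideanSpace ℂ (Fin d))‖ = 1 := by
  rw [norm_eq_sqrt_re_inner (𝕜 := ℂ), ← cInner_eq_inner, hx]
  simp

lemma cInner_eq_one_iff {x y : Fin d → ℂ} (hx : cInner x x = 1) (hy : cInner y y = 1) :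
    cInner x y = 1 ↔ x = y := by
  rw [cInner_eq_inner, inner_eq_one_iff_of_norm_eq_one (norm_toLp_eq_one hx)
    (norm_toLp_eq_one hy)]
  simp

lemma cInner_eq_neg_one_iff {x y : Fin d → ℂ} (hx : cInner x x = 1) (hy : cInner y y = 1) :
    cInner x y = -1 ↔ x = -y := by
  rw [cInner_eq_inner, inner_eq_neg_one_iff_of_norm_eq_one (norm_toLp_eq_one hx)
    (norm_toLp_eq_one hy)]
  simp [← WithLp.toLp_neg]

@[simp] lemma cInner_neg_left (x y : Fin d → ℂ) : cInner (-x) y = -cInner x y := by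
  simp [cInner]

@[simp] lemma cInner_neg_right (x y : Fin d → ℂ) : cInner x (-y) = -cInner x y := by
  simp [cInner]

lemma conj_cInner (x y : Fin d → ℂ) : starRingEnd ℂ (cInner x y) = cInner y x := by
  simp [cInner, mul_comm]

end cInner

section Antipodal

variable {d : ℕ} {X : Finset (Fin d → ℂ)}

lemma mem_innerSet {α : ℂ} : α ∈ innerSet X ↔ ∃ x ∈ X, ∃ y ∈ X, x ≠ y ∧ cInner x y = α := by
  simp [innerSet, and_assoc]

lemma nonempty_of_card_innerSet_ne_zero (h : (innerSet X).card ≠ 0) : X.Nonempty := by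
  rw [Finset.nonempty_iff_ne_empty]
  rintro rfl
  simp [innerSet] at h

lemma neg_one_mem_innerSet (hneg : ∀ x ∈ X, -x ∈ X) (hunit : ∀ x ∈ X, cInner x x = 1)
    {x : Fin d → ℂ} (hx : x ∈ X) : -1 ∈ innerSet X := by
  refine mem_innerSet.mpr ⟨x, hx, -x, hneg x hx, fun h => ?_, by simp [hunit x hx]⟩
  have h1 : cInner x x = cInner x (-x) := congrArg (cInner x) h
  norm_num [hunit x hx] at h1

lemma neg_mem_innerSet_erase_neg_one (hneg : ∀ x ∈ X, -x ∈ X)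
    (hunit : ∀ x ∈ X, cInner x x = 1) {α : ℂ} (hα : α ∈ (innerSet X).erase (-1)) :
    -α ∈ (innerSet X).erase (-1) := by
  obtain ⟨hα1, hα⟩ := Finset.mem_erase.mp hα
  obtain ⟨x, hx, y, hy, hxy, rfl⟩ := mem_innerSet.mp hα
  refine Finset.mem_erase.mpr ⟨?_, mem_innerSet.mpr ⟨x, hx, -y, hneg y hy, ?_, by simp⟩⟩
  · rwa [ne_eq, neg_inj, cInner_eq_one_iff (hunit x hx) (hunit y hy)]
  · rwa [ne_eq, ← cInner_eq_neg_one_iff (hunit x hx) (hunit y hy)]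

lemma exists_innerSet_erase_neg_one_eq_pair (hneg : ∀ x ∈ X, -x ∈ X)
    (hunit : ∀ x ∈ X, cInner x x = 1) (hcard : (innerSet X).card = 3) :
    ∃ β, (innerSet X).erase (-1) = {β, -β} := by
  obtain ⟨x, hx⟩ := nonempty_of_card_innerSet_ne_zero (hcard ▸ three_ne_zero)
  refine Finset.exists_eq_pair_neg_of_card_eq_two ?_
    fun α hα => neg_mem_innerSet_erase_neg_one hneg hunit hα
  rw [Finset.card_erase_of_mem (neg_one_mem_innerSet hneg hunit hx), hcard]

end Antipodal

section AntipodalDouble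

variable {α : Type*} [InvolutiveNeg α] [DecidableEq α] {Y : Finset α}

lemma neg_mem_union_image_neg {x : α} (hx : x ∈ Y ∪ Y.image fun y => -y) :
    -x ∈ Y ∪ Y.image fun y => -y := by
  rcases Finset.mem_union.mp hx with hx | hx
  · exact Finset.mem_union_right _ (Finset.mem_image_of_mem _ hx)
  · obtain ⟨y, hy, rfl⟩ := Finset.mem_image.mp hx
    simp [hy]

lemma card_union_image_neg (hY : Disjoint Y (Y.image fun y => -y)) :
    (Y ∪ Y.image fun y => -y).card = 2 * Y.card := by
  rw [Finset.card_union_of_disjoint hY, Finset.card_image_of_injective _ neg_injective, two_mul]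

lemma sum_union_image_neg_of_even {M : Type*} [AddCommMonoid M]
    (hY : Disjoint Y (Y.image fun y => -y)) {f : α → M} (hf : ∀ x, f (-x) = f x) :
    ∑ x ∈ Y ∪ Y.image (fun y => -y), f x = 2 • ∑ x ∈ Y, f x := by
  rw [Finset.sum_union hY, Finset.sum_image fun _ _ _ _ h => neg_injective h]
  simp [hf, two_nsmul]

end AntipodalDouble

lemma cInner_self_eq_one_of_mem_union_image_neg {d : ℕ} {Y : Finset (Fin d → ℂ)}
    (hY : ∀ x ∈ Y, cInner x x = 1) {x : Fin d → ℂ} (hx : x ∈ Y ∪ Y.image fun y => -y) :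
    cInner x x = 1 := by
  rcases Finset.mem_union.mp hx with hx | hx
  · exact hY x hx
  · obtain ⟨y, hy, rfl⟩ := Finset.mem_image.mp hx
    simpa using hY y hy

lemma exists_innerSet_union_image_neg_eq {d : ℕ} {Y : Finset (Fin d → ℂ)}
    (hunit : ∀ x ∈ Y, cInner x x = 1) (hY : Disjoint Y (Y.image fun y => -y))
    (hcard : (innerSet (Y ∪ Y.image fun y => -y)).card = 3) :
    ∃ β, innerSet (Y ∪ Y.image fun y => -y) = {β, -β, -1} ∧
      ∀ x ∈ Y, ∀ y ∈ Y, x ≠ y → cInner x y = β ∨ cInner x y = -β := by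
  have hXneg : ∀ x ∈ Y ∪ Y.image (fun y => -y), -x ∈ Y ∪ Y.image (fun y => -y) :=
    fun _ hx => neg_mem_union_image_neg hx
  have hXunit : ∀ x ∈ Y ∪ Y.image (fun y => -y), cInner x x = 1 :=
    fun _ hx => cInner_self_eq_one_of_mem_union_image_neg hunit hx
  obtain ⟨β, hβ⟩ := exists_innerSet_erase_neg_one_eq_pair hXneg hXunit hcard
  obtain ⟨z, hz⟩ := nonempty_of_card_innerSet_ne_zero (hcard ▸ three_ne_zero)
  refine ⟨β, ?_, fun x hx y hy hxy => ?_⟩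
  · rw [← Finset.insert_erase (neg_one_mem_innerSet hXneg hXunit hz), hβ]
    ext
    simp only [Finset.mem_insert, Finset.mem_singleton]
    tauto
  · have hxy' : cInner x y ≠ -1 := by
      rw [ne_eq, cInner_eq_neg_one_iff (hunit x hx) (hunit y hy)]
      exact fun h => Finset.disjoint_left.mp hY hx (Finset.mem_image.mpr ⟨y, hy, h.symm⟩)
    have hmem : cInner x y ∈ (innerSet (Y ∪ Y.image fun y => -y)).erase (-1) :=
      Finset.mem_erase.mpr ⟨hxy', mem_innerSet.mpr ⟨x, Finset.mem_union_left _ hx, y,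
        Finset.mem_union_left _ hy, hxy, rfl⟩⟩
    simpa [hβ] using hmem

section Design

variable {d : ℕ} {X : Finset (Fin d → ℂ)} {T : Finset (ℕ × ℕ)}

lemma IsDesign.sum_mul_conj (hX : IsDesign d X T) (hT : (1, 1) ∈ T)
    (i j : Fin d) :
    ∑ z ∈ X, z i * starRingEnd ℂ (z j) = if i = j then (X.card : ℂ) / d else 0 := by
  have h := hX (1, 1) hT (Pi.single i 1) (Pi.single j 1) (by simp) (by simp)
  simp only [prod_pow_pi_single] at h
  rw [h, monomialAvg]
  by_cases hij : i = j
  · subst hij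
    have hfact : (d.factorial : ℂ) = d * (d - 1).factorial := by
      exact_mod_cast (Nat.mul_factorial_pred i.pos.ne').symm
    have hfact0 : ((d - 1).factorial : ℂ) ≠ 0 := Nat.cast_ne_zero.mpr (Nat.factorial_ne_zero _)
    have hd0 : (d : ℂ) ≠ 0 := Nat.cast_ne_zero.mpr i.pos.ne'
    simp [Pi.single_apply, apply_ite, hfact]
    field_simp
  · rw [if_neg, if_neg hij, mul_zero]
    intro h0
    simpa [hij] using congrFun h0 i

lemma IsDesign.sum_mul (hX : IsDesign d X T) (hT : (2, 0) ∈ T) (i j : Fin d) :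
    ∑ z ∈ X, z i * z j = 0 := by
  have h := hX (2, 0) hT (Pi.single i 1 + Pi.single j 1) 0 (by simp [Finset.sum_add_distrib])
    (by simp)
  simp only [Pi.add_apply, pow_add, Finset.prod_mul_distrib, prod_pow_pi_single, Pi.zero_apply,
    pow_zero, Finset.prod_const_one, mul_one] at h
  rw [h, monomialAvg, if_neg, mul_zero]
  intro h0
  simpa using congrFun h0 i

end Design

section Frame

variable {d : ℕ} {Y : Finset (Fin d → ℂ)}

lemma sum_mul_conj_of_isDesign_union_image_neg {T : Finset (ℕ × ℕ)}
    (hY : Disjoint Y (Y.image fun y => -y)) (hX : IsDesign d (Y ∪ Y.image fun y => -y) T)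
    (hT : (1, 1) ∈ T) (i j : Fin d) :
    ∑ z ∈ Y, z i * starRingEnd ℂ (z j) = if i = j then (Y.card : ℂ) / d else 0 := by
  have h := hX.sum_mul_conj hT i j
  rw [sum_union_image_neg_of_even hY (by simp), card_union_image_neg hY] at h
  split_ifs at h ⊢ <;> push_cast at h <;> linear_combination h / 2

lemma sum_mul_of_isDesign_union_image_neg {T : Finset (ℕ × ℕ)}
    (hY : Disjoint Y (Y.image fun y => -y)) (hX : IsDesign d (Y ∪ Y.image fun y => -y) T)
    (hT : (2, 0) ∈ T) (i j : Fin d) : ∑ z ∈ Y, z i * z j = 0 := by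
  have h := hX.sum_mul hT i j
  rw [sum_union_image_neg_of_even hY (by simp)] at h
  simpa using h

lemma sum_cInner_mul_cInner_eq_zero (hY : ∀ i j, ∑ z ∈ Y, z i * z j = 0)
    (x w : Fin d → ℂ) : ∑ y ∈ Y, cInner x y * cInner w y = 0 := by
  calc ∑ y ∈ Y, cInner x y * cInner w y
      = ∑ i, ∑ j, starRingEnd ℂ (x i) * starRingEnd ℂ (w j) * ∑ y ∈ Y, y i * y j := by
        simp only [cInner, Finset.sum_mul_sum]
        simp only [Finset.mul_sum]
        rw [Finset.sum_comm]
        refine Finset.sum_congr rfl fun i _ => ?_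
        rw [Finset.sum_comm]
        refine Finset.sum_congr rfl fun j _ => Finset.sum_congr rfl fun y _ => ?_
        ring
    _ = 0 := by simp [hY]

lemma sum_cInner_mul_cInner_swap {c : ℂ}
    (hY : ∀ i j, ∑ z ∈ Y, z i * starRingEnd ℂ (z j) = if i = j then c else 0)
    (x w : Fin d → ℂ) : ∑ y ∈ Y, cInner x y * cInner y w = c * cInner x w := by
  calc ∑ y ∈ Y, cInner x y * cInner y w
      = ∑ i, ∑ j, starRingEnd ℂ (x i) * w j * ∑ y ∈ Y, y i * starRingEnd ℂ (y j) := by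
        simp only [cInner, Finset.sum_mul_sum]
        simp only [Finset.mul_sum]
        rw [Finset.sum_comm]
        refine Finset.sum_congr rfl fun i _ => ?_
        rw [Finset.sum_comm]
        refine Finset.sum_congr rfl fun j _ => Finset.sum_congr rfl fun y _ => ?_
        ring
    _ = c * cInner x w := by
        simp [hY, cInner, Finset.mul_sum, mul_comm, mul_left_comm]

end Frame

lemma eq_two_mul_and_eq_I_div_sqrt {d n : ℕ} (hd : 1 ≤ d) (hn : n ≠ 0) {β : ℂ}
    (hsq : 1 + ((n : ℂ) - 1) * β ^ 2 = 0)
    (hnormSq : 1 + ((n : ℂ) - 1) * (β * starRingEnd ℂ β) = n / d) :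
    n = 2 * d ∧ (β = Complex.I / (√(2 * (d : ℝ) - 1) : ℂ) ∨
      β = -(Complex.I / (√(2 * (d : ℝ) - 1) : ℂ))) := by
  have hn2 : 2 ≤ n := by
    by_contra h
    obtain rfl : n = 1 := by omega
    norm_num at hsq
  set r : ℝ := n - 1 with hr_def
  have hr : 0 < r := by
    rw [hr_def, sub_pos]
    exact_mod_cast hn2
  have hrC : (r : ℂ) = n - 1 := by simp [hr_def]
  have hβ := eq_I_div_sqrt_or_eq_neg hr (b := β) (by rw [hrC]; linear_combination hsq)
  have hr0 : (r : ℂ) ≠ 0 := by exact_mod_cast hr.ne'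
  have hβconj : β * starRingEnd ℂ β = 1 / r := by
    have hsqrt : ((√r : ℝ) : ℂ) ^ 2 = r := by exact_mod_cast Real.sq_sqrt hr.le
    have hs0 : ((√r : ℝ) : ℂ) ≠ 0 := by exact_mod_cast (Real.sqrt_pos.mpr hr).ne'
    rcases hβ with rfl | rfl <;> simp only [map_neg, neg_mul_neg, conj_I_div_ofReal] <;>
      field_simp <;> simp [hsqrt]
  have hn : n = 2 * d := by
    have hd0 : (d : ℂ) ≠ 0 := Nat.cast_ne_zero.mpr (by omega)
    rw [hβconj, ← hrC, mul_one_div_cancel hr0] at hnormSq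
    field_simp at hnormSq
    exact_mod_cast (by linear_combination -hnormSq : (n : ℂ) = 2 * d)
  refine ⟨hn, ?_⟩
  have hr2d : r = 2 * (d : ℝ) - 1 := by
    rw [hr_def, hn]
    push_cast
    ring
  rwa [hr2d] at hβ

lemma card_eq_two_mul_and_eq_I_div_sqrt_of_tight_frame {d : ℕ} (hd : 1 ≤ d)
    {Y : Finset (Fin d → ℂ)} (hY : Y.Nonempty) (hunit : ∀ x ∈ Y, cInner x x = 1)
    (h11 : ∀ i j, ∑ z ∈ Y, z i * starRingEnd ℂ (z j) =
      if i = j then (Y.card : ℂ) / d else 0)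
    (h20 : ∀ i j, ∑ z ∈ Y, z i * z j = 0) {β : ℂ}
    (hoff : ∀ x ∈ Y, ∀ y ∈ Y, x ≠ y → cInner x y = β ∨ cInner x y = -β) :
    Y.card = 2 * d ∧ (β = Complex.I / (√(2 * (d : ℝ) - 1) : ℂ) ∨
      β = -(Complex.I / (√(2 * (d : ℝ) - 1) : ℂ))) := by
  obtain ⟨x, hx⟩ := hY
  have hsq := Finset.sum_eq_add_card_sub_one_mul hx (f := fun y => cInner x y * cInner x y)
    (v := β ^ 2) fun y hy hyx => by rcases hoff x hx y hy hyx.symm with h | h <;> rw [h] <;> ring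
  have hnormSq := Finset.sum_eq_add_card_sub_one_mul hx (f := fun y => cInner x y * cInner y x)
    (v := β * starRingEnd ℂ β) fun y hy hyx => by
      rw [← conj_cInner x y]
      rcases hoff x hx y hy hyx.symm with h | h <;> simp [h]
  rw [sum_cInner_mul_cInner_eq_zero h20, hunit x hx, one_mul] at hsq
  rw [sum_cInner_mul_cInner_swap h11, hunit x hx, one_mul, mul_one] at hnormSq
  exact eq_two_mul_and_eq_I_div_sqrt hd (Finset.card_ne_zero_of_mem hx) hsq.symm hnormSq.symm

section ConferenceMatrix

variable {d : ℕ} {Y : Finset (Fin d → ℂ)}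

noncomputable def gramMatrix (Y : Finset (Fin d → ℂ)) :
    Matrix {v // v ∈ Y} {v // v ∈ Y} ℂ :=
  Matrix.gram ℂ fun x : {v // v ∈ Y} => (WithLp.toLp 2 x.1 : EuclideanSpace ℂ (Fin d))

lemma gramMatrix_apply (x y : {v // v ∈ Y}) : gramMatrix Y x y = cInner x.1 y.1 := by
  rw [gramMatrix, Matrix.gram_apply, cInner_eq_inner]

lemma confC_eq_smul_gramMatrix_sub_one :
    confC Y = (Complex.I * (√(2 * (d : ℝ) - 1) : ℂ)) • (gramMatrix Y - 1) := by
  ext x y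
  simp [confC, gramMatrix_apply, Matrix.one_apply]

lemma gramMatrix_mul_transpose_eq_zero (hY : ∀ i j, ∑ z ∈ Y, z i * z j = 0) :
    gramMatrix Y * (gramMatrix Y)ᵀ = 0 := by
  ext x y
  simp only [Matrix.mul_apply, Matrix.transpose_apply, gramMatrix_apply, Matrix.zero_apply]
  rw [Finset.univ_eq_attach, Finset.sum_attach Y fun z => cInner x.1 z * cInner y.1 z]
  exact sum_cInner_mul_cInner_eq_zero hY x.1 y.1

lemma gramMatrix_add_transpose (hunit : ∀ x ∈ Y, cInner x x = 1)
    (hre : ∀ x ∈ Y, ∀ y ∈ Y, x ≠ y → (cInner x y).re = 0) :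
    gramMatrix Y + (gramMatrix Y)ᵀ = (2 : ℂ) • 1 := by
  ext x y
  simp only [Matrix.add_apply, Matrix.transpose_apply, gramMatrix_apply, Matrix.smul_apply,
    Matrix.one_apply, smul_eq_mul]
  split_ifs with h
  · subst h
    rw [hunit x.1 x.2]
    norm_num
  · rw [← conj_cInner x.1 y.1, Complex.add_conj, hre x.1 x.2 y.1 y.2 (Subtype.coe_ne_coe.mpr h)]
    simp

lemma confC_apply_self (hunit : ∀ x ∈ Y, cInner x x = 1) (x : {v // v ∈ Y}) :
    confC Y x x = 0 := by
  simp [confC, hunit x.1 x.2]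

lemma confC_apply_of_ne {x y : {v // v ∈ Y}} (h : x ≠ y) :
    confC Y x y = Complex.I * (√(2 * (d : ℝ) - 1) : ℂ) * cInner x.1 y.1 := by
  simp [confC, h]

lemma confC_apply_eq_one_or_eq_neg_one (hd : 1 ≤ d)
    (hoff : ∀ x ∈ Y, ∀ y ∈ Y, x ≠ y →
      cInner x y = Complex.I / (√(2 * (d : ℝ) - 1) : ℂ) ∨
        cInner x y = -(Complex.I / (√(2 * (d : ℝ) - 1) : ℂ)))
    {x y : {v // v ∈ Y}} (hxy : x ≠ y) : confC Y x y = 1 ∨ confC Y x y = -1 := by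
  have hsqrt0 : √(2 * (d : ℝ) - 1) ≠ 0 := by
    have : (1 : ℝ) ≤ d := by exact_mod_cast hd
    exact (Real.sqrt_pos.mpr (by linarith)).ne'
  rw [confC_apply_of_ne hxy]
  rcases hoff x.1 x.2 y.1 y.2 (Subtype.coe_ne_coe.mpr hxy) with h | h <;> rw [h]
  · exact Or.inr (I_mul_ofReal_mul_I_div_ofReal hsqrt0)
  · exact Or.inl (by rw [mul_neg, I_mul_ofReal_mul_I_div_ofReal hsqrt0, neg_neg])

lemma im_confC_eq_zero (hunit : ∀ x ∈ Y, cInner x x = 1)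
    (hpm : ∀ x y : {v // v ∈ Y}, x ≠ y → confC Y x y = 1 ∨ confC Y x y = -1)
    (x y : {v // v ∈ Y}) : (confC Y x y).im = 0 := by
  by_cases h : x = y
  · simp [h, confC_apply_self hunit]
  · rcases hpm x y h with h | h <;> simp [h]

lemma transpose_confC (hG : gramMatrix Y + (gramMatrix Y)ᵀ = (2 : ℂ) • 1) :
    (confC Y)ᵀ = -confC Y := by
  rw [confC_eq_smul_gramMatrix_sub_one, Matrix.transpose_smul, Matrix.transpose_sub,
    Matrix.transpose_one, eq_sub_of_add_eq' hG]
  module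

lemma confC_mul_transpose (hd : 1 ≤ d) (hG : gramMatrix Y + (gramMatrix Y)ᵀ = (2 : ℂ) • 1)
    (hGG : gramMatrix Y * (gramMatrix Y)ᵀ = 0) :
    confC Y * (confC Y)ᵀ = ((2 * (d : ℝ) - 1 : ℝ) : ℂ) • 1 := by
  have hsqrt : ((√(2 * (d : ℝ) - 1) : ℝ) : ℂ) ^ 2 = ((2 * (d : ℝ) - 1 : ℝ) : ℂ) := by
    have : (1 : ℝ) ≤ d := by exact_mod_cast hd
    rw [← Complex.ofReal_pow, Real.sq_sqrt (by linarith)]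
  have hprod : (gramMatrix Y - 1) * ((gramMatrix Y)ᵀ - 1) = -1 := by
    rw [sub_mul, mul_sub, mul_sub, hGG, mul_one, one_mul, mul_one, eq_sub_of_add_eq' hG]
    module
  rw [confC_eq_smul_gramMatrix_sub_one, Matrix.transpose_smul, Matrix.transpose_sub,
    Matrix.transpose_one, Matrix.smul_mul, Matrix.mul_smul, hprod, smul_smul, ← hsqrt, smul_neg,
    ← neg_smul]
  congr 1
  linear_combination (-((√(2 * (d : ℝ) - 1) : ℝ) : ℂ) ^ 2) * Complex.I_sq

end ConferenceMatrix

/-- a 2-antipodal `{(i,j) : i+j ≤ 3}`-design `X = Y ∪ (−Y)` of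
degree 3 gives a skew-symmetric conference matrix `C = i√(2d−1)(G − I)` on `Y`,
with `|Y| = 2d` and `A(X) = {i/√(2d−1), −i/√(2d−1), −1}`. -/
theorem stmt_17 {d : ℕ} (hd : 1 ≤ d) (Y : Finset (Fin d → ℂ))
    (hYsphere : ∀ x ∈ Y, cInner x x = 1)
    (hYdisj : Disjoint Y (Y.image fun x => -x))
    (hdesign : IsDesign d (Y ∪ Y.image fun x => -x)
      (((Finset.range 4) ×ˢ (Finset.range 4)).filter fun p => p.1 + p.2 ≤ 3))
    (hdeg : (innerSet (Y ∪ Y.image fun x => -x)).card = 3) :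
    Y.card = 2 * d ∧
    innerSet (Y ∪ Y.image fun x => -x) =
      {Complex.I / (Real.sqrt (2 * (d : ℝ) - 1) : ℂ),
       -(Complex.I / (Real.sqrt (2 * (d : ℝ) - 1) : ℂ)), -1} ∧
    (∀ x y : {v // v ∈ Y}, (confC Y x y).im = 0) ∧
    (∀ x : {v // v ∈ Y}, confC Y x x = 0) ∧
    (∀ x y : {v // v ∈ Y}, x ≠ y → confC Y x y = 1 ∨ confC Y x y = -1) ∧
    (confC Y)ᵀ = -(confC Y) ∧
    confC Y * (confC Y)ᵀ = ((2 * (d : ℝ) - 1 : ℝ) : ℂ) • 1 := by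
  obtain ⟨β, hset, hoffβ⟩ := exists_innerSet_union_image_neg_eq hYsphere hYdisj hdeg
  have hY : Y.Nonempty := by
    simpa using nonempty_of_card_innerSet_ne_zero (X := Y ∪ Y.image fun x => -x) (by omega)
  have h20 := sum_mul_of_isDesign_union_image_neg hYdisj hdesign (by decide)
  obtain ⟨hcard, hβ⟩ := card_eq_two_mul_and_eq_I_div_sqrt_of_tight_frame hd hY hYsphere
    (sum_mul_conj_of_isDesign_union_image_neg hYdisj hdesign (by decide)) h20 hoffβ
  set ι : ℂ := Complex.I / (√(2 * (d : ℝ) - 1) : ℂ)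
  have hoff : ∀ x ∈ Y, ∀ y ∈ Y, x ≠ y → cInner x y = ι ∨ cInner x y = -ι := by
    rcases hβ with rfl | rfl
    · exact hoffβ
    · simpa [or_comm] using hoffβ
  have hpm := fun (x y : {v // v ∈ Y}) (hxy : x ≠ y) =>
    confC_apply_eq_one_or_eq_neg_one hd hoff hxy
  have hG := gramMatrix_add_transpose hYsphere fun x hx y hy hxy => by
    rcases hoff x hx y hy hxy with h | h <;> simp [h, ι]
  refine ⟨hcard, ?_, im_confC_eq_zero hYsphere hpm, confC_apply_self hYsphere, hpm,
    transpose_confC hG, confC_mul_transpose hd hG (gramMatrix_mul_transpose_eq_zero h20)⟩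
  rcases hβ with rfl | rfl
  · exact hset
  · rw [hset, neg_neg, Finset.insert_comm]
end
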